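/- arXiv:2110.11549 — 2 statements merged into one kernel-verified Lean document; each statement's English description precedes it below -/
import Mathlib

section
/- For positive integers a, b and positive integer t, ∑_{i=0}^{t} ((t-i+1)·F(a,b,-i,t) + (t-i+1)·F(b-1,a+1,-i,t)) = (t+2)·F(a+1,b,0,t), where F is the bounded-coordinate solution count. -/
/-!
All counts involved are counts of tuples in `{0, …, t}^(a+b)` with a prescribed sum. The
reflection `x ↦ t - x` turns the tuples counted by `F (b-1) (a+1) (-i) t` into those counted by
`F a b (-(t-i)) t`, so after reindexing the left side is `∑ i, ((t-i+1) + (i+1)) F a b (-i) t`.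
Splitting off the value of one coordinate shows `F (a+1) b 0 t = ∑_{i ≤ t} F a b (-i) t`.
-/

def F (a b : ℕ) (c : ℤ) (t : ℕ) : ℕ :=
  (Finset.univ.filter
    (fun x : Fin (a + b) → Fin (t + 1) => ∑ i, (x i : ℤ) = b * t + c)).card

open Finset

def boundedSumCount (n t : ℕ) (s : ℤ) : ℕ :=
  #{x : Fin n → Fin (t + 1) | ∑ i, (x i : ℤ) = s}

lemma Fin.intCast_rev {t : ℕ} (k : Fin (t + 1)) : ((k.rev : ℕ) : ℤ) = t - k := by
  have := k.isLt
  rw [Fin.val_rev]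
  omega

lemma boundedSumCount_reflect (n t : ℕ) (s : ℤ) :
    boundedSumCount n t s = boundedSumCount n t (n * t - s) := by
  refine card_equiv (Equiv.arrowCongr (Equiv.refl _) Fin.revPerm) fun x => ?_
  simp only [mem_filter, mem_univ, true_and, Equiv.arrowCongr_apply, Equiv.refl_symm,
    Equiv.refl_apply, Function.comp_apply, Fin.revPerm_apply, Fin.intCast_rev, sum_sub_distrib,
    sum_const, card_univ, Fintype.card_fin, nsmul_eq_mul]
  constructor <;> intro h <;> linarith

lemma boundedSumCount_succ (n t : ℕ) (s : ℤ) :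
    boundedSumCount (n + 1) t s = ∑ i ∈ range (t + 1), boundedSumCount n t (s - i) := by
  rw [← Fin.sum_univ_eq_sum_range (fun i => boundedSumCount n t (s - i)), boundedSumCount,
    card_filter, ← (Fin.consEquiv fun _ => Fin (t + 1)).sum_comp, Fintype.sum_prod_type]
  refine sum_congr rfl fun v _ => ?_
  simp only [boundedSumCount, card_filter, Fin.consEquiv_apply, Fin.sum_univ_succ, Fin.cons_zero,
    Fin.cons_succ, add_comm (v : ℤ), ← eq_sub_iff_add_eq]

lemma sum_range_mul_add_mul_reflect (f : ℕ → ℕ) (t : ℕ) :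
    ∑ i ∈ range (t + 1), ((t - i + 1) * f i + (t - i + 1) * f (t - i))
      = (t + 2) * ∑ i ∈ range (t + 1), f i := by
  have hreflect : ∑ i ∈ range (t + 1), (t - i + 1) * f (t - i)
      = ∑ i ∈ range (t + 1), (i + 1) * f i := by
    rw [← sum_range_reflect (fun i => (i + 1) * f i)]
    simp only [add_tsub_cancel_right]
  rw [sum_add_distrib, hreflect, ← sum_add_distrib, mul_sum]
  refine sum_congr rfl fun i hi => ?_
  have hit : i ≤ t := Nat.lt_succ_iff.mp (mem_range.mp hi)
  rw [← add_mul, show t - i + 1 + (i + 1) = t + 2 by omega]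

lemma F_eq_boundedSumCount (a b : ℕ) (c : ℤ) (t : ℕ) :
    F a b c t = boundedSumCount (a + b) t (b * t + c) := rfl

theorem stmt9_general (a b t : ℕ) (hb : 1 ≤ b) :
    ∑ i ∈ Finset.range (t + 1),
        ((t - i + 1) * F a b (-(i : ℤ)) t + (t - i + 1) * F (b - 1) (a + 1) (-(i : ℤ)) t)
      = (t + 2) * F (a + 1) b 0 t := by
  set g : ℕ → ℕ := fun i => boundedSumCount (a + b) t (b * t - i)
  have hF : ∀ i : ℕ, F a b (-(i : ℤ)) t = g i := fun i => by
    rw [F_eq_boundedSumCount, ← sub_eq_add_neg]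
  have hF_reflect : ∀ i ≤ t, F (b - 1) (a + 1) (-(i : ℤ)) t = g (t - i) := fun i hi => by
    rw [F_eq_boundedSumCount, show b - 1 + (a + 1) = a + b by omega, boundedSumCount_reflect]
    congr 1
    push_cast [hb, hi]
    ring
  have hF_succ : F (a + 1) b 0 t = ∑ i ∈ range (t + 1), g i := by
    rw [F_eq_boundedSumCount, add_right_comm, boundedSumCount_succ, add_zero]
  rw [hF_succ, ← sum_range_mul_add_mul_reflect]
  refine sum_congr rfl fun i hi => ?_
  rw [hF, hF_reflect i (Nat.lt_succ_iff.mp (mem_range.mp hi))]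

theorem stmt9 (a b t : ℕ) (ha : 1 ≤ a) (hb : 1 ≤ b) (ht : 1 ≤ t) :
    ∑ i ∈ Finset.range (t + 1),
        ((t - i + 1) * F a b (-(i : ℤ)) t + (t - i + 1) * F (b - 1) (a + 1) (-(i : ℤ)) t)
      = (t + 2) * F (a + 1) b 0 t :=
  stmt9_general a b t hb
end

section
/- For positive integers a and t, ∑_{i=0}^{t} (t-i+1)·F(a,a+1,-i,t) = (1/2)·(t+2)·F(a+1,a+1,0,t); equivalently, 2·∑_{i=0}^{t} (t-i+1)·F(a,a+1,-i,t) = (t+2)·F(a+1,a+1,0,t), where F is the bounded-coordinate solution count. -/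
def G (n t : ℕ) (s : ℤ) : ℕ :=
  (Finset.univ.filter
    (fun x : Fin n → Fin (t + 1) => ∑ i, (x i : ℤ) = s)).card

lemma rev_cast (t : ℕ) (j : Fin (t + 1)) : ((j.rev : ℕ) : ℤ) = t - (j : ℤ) := by
  have h := j.is_lt
  rw [Fin.val_rev]
  omega

lemma G_symm (n t : ℕ) (s : ℤ) : G n t s = G n t (n * t - s) := by
  unfold G
  refine Finset.card_bij' (fun x _ => fun i => (x i).rev) (fun x _ => fun i => (x i).rev)
    ?_ ?_ ?_ ?_
  · intro x hx
    simp only [Finset.mem_filter, Finset.mem_univ, true_and] at hx ⊢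
    simp only [rev_cast, Finset.sum_sub_distrib, Finset.sum_const, Finset.card_univ,
      Fintype.card_fin, hx]
    ring
  · intro x hx
    simp only [Finset.mem_filter, Finset.mem_univ, true_and] at hx ⊢
    simp only [rev_cast, Finset.sum_sub_distrib, Finset.sum_const, Finset.card_univ,
      Fintype.card_fin, hx]
    ring
  · intro x _; funext i; simp
  · intro x _; funext i; simp

lemma G_succ (n t : ℕ) (s : ℤ) :
    G (n + 1) t s = ∑ j ∈ Finset.range (t + 1), G n t (s - j) := by
  unfold G
  rw [Finset.card_eq_sum_card_fiberwise
    (f := fun x : Fin (n + 1) → Fin (t + 1) => x 0) (t := Finset.univ)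
    (fun x _ => Finset.mem_univ _)]
  rw [← Fin.sum_univ_eq_sum_range (fun j => (Finset.univ.filter
    (fun x : Fin n → Fin (t + 1) => ∑ i, (x i : ℤ) = s - j)).card)]
  refine Finset.sum_congr rfl fun j _ => ?_
  refine Finset.card_bij' (fun x _ => Fin.tail x) (fun y _ => Fin.cons j y) ?_ ?_ ?_ ?_
  · intro x hx
    simp only [Finset.mem_filter, Finset.mem_univ, true_and] at hx ⊢
    obtain ⟨hs, h0⟩ := hx
    rw [Fin.sum_univ_succ, h0] at hs
    have he : ∑ i, ((Fin.tail x i : ℤ)) = ∑ i : Fin n, (x i.succ : ℤ) := rfl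
    rw [he]
    linarith
  · intro y hy
    simp only [Finset.mem_filter, Finset.mem_univ, true_and] at hy ⊢
    refine ⟨?_, by simp⟩
    rw [Fin.sum_univ_succ]
    simp only [Fin.cons_zero, Fin.cons_succ]
    linarith
  · intro x hx
    simp only [Finset.mem_filter, Finset.mem_univ, true_and] at hx
    obtain ⟨h1, h2⟩ := hx
    subst h2
    show Fin.cons (x 0) (Fin.tail x) = x
    exact Fin.cons_self_tail x
  · intro y _
    exact Fin.tail_cons (α := fun _ => Fin (t + 1)) j y

theorem stmt10 (a t : ℕ) (ha : 1 ≤ a) (ht : 1 ≤ t) :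
    2 * ∑ i ∈ Finset.range (t + 1), (t - i + 1) * F a (a + 1) (-(i : ℤ)) t
      = (t + 2) * F (a + 1) (a + 1) 0 t := by
  have hF : ∀ i : ℕ, F a (a + 1) (-(i : ℤ)) t = G (a + (a + 1)) t ((a + 1) * t - i) := by
    intro i; unfold F G; norm_num [sub_eq_add_neg]
  have hF2 : F (a + 1) (a + 1) 0 t = G (a + (a + 1) + 1) t ((a + 1) * t) := by
    unfold F G
    have : (a + 1) + (a + 1) = a + (a + 1) + 1 := by ring
    rw [this]
    norm_num
  -- symmetry of f_i
  have hsym : ∀ i : ℕ, i ≤ t →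
      G (a + (a + 1)) t ((a + 1) * t - (t - i : ℕ)) = G (a + (a + 1)) t ((a + 1) * t - i) := by
    intro i hi
    rw [G_symm (a + (a + 1)) t ((a + 1) * t - i)]
    congr 1
    push_cast [hi]
    ring
  have hsplit : G (a + (a + 1) + 1) t ((a + 1) * t)
      = ∑ i ∈ Finset.range (t + 1), G (a + (a + 1)) t ((a + 1) * t - i) :=
    G_succ _ _ _
  rw [hF2, hsplit]
  simp only [hF]
  set g : ℕ → ℕ := fun i => G (a + (a + 1)) t ((a + 1) * t - i) with hg
  have hrefl : ∑ i ∈ Finset.range (t + 1), (t - i + 1) * g i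
      = ∑ i ∈ Finset.range (t + 1), (t - (t - i) + 1) * g (t - i) := by
    have := Finset.sum_range_reflect (fun i => (t - i + 1) * g i) (t + 1)
    simp only [Nat.add_sub_cancel] at this
    exact this.symm
  have key : ∀ i ∈ Finset.range (t + 1),
      (t - i + 1) * g i + (t - (t - i) + 1) * g (t - i) = (t + 2) * g i := by
    intro i hi
    rw [Finset.mem_range] at hi
    have hi' : i ≤ t := by omega
    have : g (t - i) = g i := by
      simp only [hg]
      exact hsym i hi'
    rw [this]
    have : t - (t - i) = i := by omega
    rw [this]
    have : (t - i + 1) + (i + 1) = t + 2 := by omega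
    nlinarith [Nat.sub_add_cancel hi']
  calc 2 * ∑ i ∈ Finset.range (t + 1), (t - i + 1) * g i
      = ∑ i ∈ Finset.range (t + 1), (t - i + 1) * g i
        + ∑ i ∈ Finset.range (t + 1), (t - (t - i) + 1) * g (t - i) := by
        rw [← hrefl]; ring
    _ = ∑ i ∈ Finset.range (t + 1), ((t - i + 1) * g i + (t - (t - i) + 1) * g (t - i)) := by
        rw [Finset.sum_add_distrib]
    _ = ∑ i ∈ Finset.range (t + 1), (t + 2) * g i := Finset.sum_congr rfl key
    _ = (t + 2) * ∑ i ∈ Finset.range (t + 1), g i := by rw [Finset.mul_sum]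
end
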